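/- (von Bahr–Esseen inequality) Let U₁,…,Uₙ be independent real-valued random variables with mean zero, and let 1 ≤ κ ≤ 2. Then E[|∑_{i=1}^n U_i|^κ] ≤ 8 ∑_{i=1}^n E[|U_i|^κ]. -/

import Mathlib

open MeasureTheory ProbabilityTheory Finset

/-!
Put `φ t = sign t * |t| ^ (κ - 1)` (for `κ = 1` this is `sign`, with `φ 0 = 0`). Then `κ φ` is a
subgradient of the convex function `|·| ^ κ`, and `φ` is `(κ - 1)`-Hölder with constant `2`.
The subgradient inequality at `x + y` followed by the Hölder bound gives
`|x + y| ^ κ ≤ |x| ^ κ + κ φ(x) y + 2κ |y| ^ κ`. If `Y` is centred and independent of `X`, the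
middle term has expectation `κ E[φ X] E[Y] = 0`, so adding one independent summand raises
`E |·| ^ κ` by at most `4 E |Y| ^ κ`; induction over the summands gives the constant `4`.
-/

noncomputable def signedRpow (α t : ℝ) : ℝ := Real.sign t * |t| ^ α

lemma rpow_sub_one_mul_self {x κ : ℝ} (hx : 0 ≤ x) (hκ : κ ≠ 0) : x ^ (κ - 1) * x = x ^ κ := by
  rw [← Real.rpow_add_one' hx (by simpa using hκ), sub_add_cancel]

section signedRpow

variable {α : ℝ}

lemma signedRpow_neg (α t : ℝ) : signedRpow α (-t) = -signedRpow α t := by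
  rw [signedRpow, signedRpow, Real.sign_neg, abs_neg, neg_mul]

lemma signedRpow_of_pos {t : ℝ} (ht : 0 < t) : signedRpow α t = t ^ α := by
  rw [signedRpow, Real.sign_of_pos ht, abs_of_pos ht, one_mul]

lemma signedRpow_nonneg {t : ℝ} (ht : 0 ≤ t) : 0 ≤ signedRpow α t := by
  rcases ht.eq_or_lt with rfl | ht
  · simp [signedRpow]
  · rw [signedRpow_of_pos ht]
    positivity

lemma abs_signedRpow_le (α t : ℝ) : |signedRpow α t| ≤ |t| ^ α := by
  rw [signedRpow, abs_mul, abs_of_nonneg (by positivity : 0 ≤ |t| ^ α)]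
  refine mul_le_of_le_one_left (by positivity) ?_
  rcases Real.sign_apply_eq t with h | h | h <;> simp [h]

lemma signedRpow_mul_self {κ : ℝ} (hκ : κ ≠ 0) (t : ℝ) :
    signedRpow (κ - 1) t * t = |t| ^ κ := by
  have hsign : Real.sign t * t = |t| := by
    rcases lt_trichotomy t 0 with h | rfl | h
    · simp [Real.sign_of_neg h, abs_of_neg h]
    · simp
    · simp [Real.sign_of_pos h, abs_of_pos h]
  rw [signedRpow, mul_right_comm, hsign, mul_comm, rpow_sub_one_mul_self (abs_nonneg t) hκ]

lemma signedRpow_monotone (hα : 0 ≤ α) : Monotone (signedRpow α) := by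
  have hpos {a b : ℝ} (ha : 0 < a) (hab : a ≤ b) : signedRpow α a ≤ signedRpow α b := by
    rw [signedRpow_of_pos ha, signedRpow_of_pos (ha.trans_le hab)]
    exact Real.rpow_le_rpow ha.le hab hα
  intro a b hab
  rcases lt_or_ge 0 a with ha | ha
  · exact hpos ha hab
  rcases lt_or_ge b 0 with hb | hb
  · simpa [signedRpow_neg] using hpos (neg_pos.2 hb) (neg_le_neg hab)
  · calc signedRpow α a = -signedRpow α (-a) := by rw [signedRpow_neg, neg_neg]
      _ ≤ 0 := neg_nonpos.2 (signedRpow_nonneg (neg_nonneg.2 ha))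
      _ ≤ signedRpow α b := signedRpow_nonneg hb

lemma signedRpow_sub_le (hα0 : 0 ≤ α) (hα1 : α ≤ 1) (a b : ℝ) :
    signedRpow α a - signedRpow α b ≤ 2 * |a - b| ^ α := by
  have hpos {a b : ℝ} (hb : 0 < b) (hba : b ≤ a) :
      signedRpow α a - signedRpow α b ≤ 2 * |a - b| ^ α := by
    have hsub := Real.rpow_add_le_add_rpow (sub_nonneg.2 hba) hb.le hα0 hα1
    rw [sub_add_cancel] at hsub
    rw [signedRpow_of_pos hb, signedRpow_of_pos (hb.trans_le hba),
      abs_of_nonneg (sub_nonneg.2 hba)]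
    linarith [Real.rpow_nonneg (sub_nonneg.2 hba) α]
  rcases le_or_gt a b with hab | hba
  · linarith [signedRpow_monotone hα0 hab, Real.rpow_nonneg (abs_nonneg (a - b)) α]
  rcases lt_or_ge 0 b with hb | hb
  · exact hpos hb hba.le
  rcases lt_or_ge a 0 with ha | ha
  · have h := hpos (neg_pos.2 ha) (neg_le_neg hba.le)
    rwa [signedRpow_neg, signedRpow_neg, neg_sub_neg, neg_sub_neg] at h
  · have hA : |a| ≤ |a - b| := by rw [abs_of_nonneg ha, abs_of_pos (sub_pos.2 hba)]; linarith
    have hB : |b| ≤ |a - b| := by rw [abs_of_nonpos hb, abs_of_pos (sub_pos.2 hba)]; linarith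
    calc signedRpow α a - signedRpow α b ≤ |a| ^ α + |b| ^ α := by
          linarith [le_abs_self (signedRpow α a), neg_abs_le (signedRpow α b),
            abs_signedRpow_le α a, abs_signedRpow_le α b]
      _ ≤ |a - b| ^ α + |a - b| ^ α := by gcongr
      _ = 2 * |a - b| ^ α := by ring

lemma abs_signedRpow_sub_le (hα0 : 0 ≤ α) (hα1 : α ≤ 1) (a b : ℝ) :
    |signedRpow α a - signedRpow α b| ≤ 2 * |a - b| ^ α := by
  refine abs_sub_le_iff.2 ⟨signedRpow_sub_le hα0 hα1 a b, ?_⟩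
  rw [abs_sub_comm a b]
  exact signedRpow_sub_le hα0 hα1 b a

end signedRpow

/-- Young's inequality for the exponents `κ` and `κ / (κ - 1)`. -/
lemma mul_mul_rpow_sub_one_le {κ x y : ℝ} (hκ : 1 ≤ κ) (hx : 0 ≤ x) (hy : 0 ≤ y) :
    κ * (x * y ^ (κ - 1)) ≤ x ^ κ + (κ - 1) * y ^ κ := by
  have hκ0 : κ ≠ 0 := by positivity
  have h := Real.geom_mean_le_arith_mean2_weighted (p₁ := x ^ κ) (p₂ := y ^ κ)
    (inv_nonneg.2 (zero_le_one.trans hκ)) (sub_nonneg.2 (inv_le_one_of_one_le₀ hκ))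
    (by positivity) (by positivity) (add_sub_cancel _ _)
  rw [Real.rpow_rpow_inv hx hκ0, ← Real.rpow_mul hy, mul_sub, mul_one,
    mul_inv_cancel₀ hκ0] at h
  calc κ * (x * y ^ (κ - 1)) ≤ κ * (κ⁻¹ * x ^ κ + (1 - κ⁻¹) * y ^ κ) := by gcongr
    _ = x ^ κ + (κ - 1) * y ^ κ := by field_simp

lemma abs_rpow_add_mul_signedRpow_le {κ : ℝ} (hκ : 1 ≤ κ) (a b : ℝ) :
    |b| ^ κ + κ * signedRpow (κ - 1) b * (a - b) ≤ |a| ^ κ := by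
  have hb := signedRpow_mul_self (by positivity : κ ≠ 0) b
  have ha : signedRpow (κ - 1) b * a ≤ |a| * |b| ^ (κ - 1) :=
    calc signedRpow (κ - 1) b * a ≤ |signedRpow (κ - 1) b| * |a| := by
          rw [← abs_mul]; exact le_abs_self _
      _ ≤ |b| ^ (κ - 1) * |a| := by gcongr; exact abs_signedRpow_le _ _
      _ = |a| * |b| ^ (κ - 1) := mul_comm _ _
  have hyoung := mul_mul_rpow_sub_one_le hκ (abs_nonneg a) (abs_nonneg b)
  nlinarith

lemma abs_add_rpow_le {κ : ℝ} (hκ1 : 1 ≤ κ) (hκ2 : κ ≤ 2) (x y : ℝ) :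
    |x + y| ^ κ ≤ |x| ^ κ + κ * signedRpow (κ - 1) x * y + 4 * |y| ^ κ := by
  have hconvex := abs_rpow_add_mul_signedRpow_le hκ1 x (x + y)
  have hholder : (signedRpow (κ - 1) (x + y) - signedRpow (κ - 1) x) * y ≤ 2 * |y| ^ κ :=
    calc _ ≤ |signedRpow (κ - 1) (x + y) - signedRpow (κ - 1) x| * |y| := by
          rw [← abs_mul]; exact le_abs_self _
      _ ≤ 2 * |y| ^ (κ - 1) * |y| := by
          gcongr
          simpa using abs_signedRpow_sub_le (by linarith) (by linarith) (x + y) x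
      _ = 2 * |y| ^ κ := by rw [mul_assoc, rpow_sub_one_mul_self (abs_nonneg y) (by positivity)]
  nlinarith [mul_le_mul_of_nonneg_left hholder (zero_le_one.trans hκ1),
    mul_nonneg (sub_nonneg.2 hκ2) (Real.rpow_nonneg (abs_nonneg y) κ)]

lemma abs_signedRpow_sub_one_le {κ : ℝ} (hκ : 1 ≤ κ) (t : ℝ) :
    |signedRpow (κ - 1) t| ≤ 1 + |t| ^ κ := by
  refine (abs_signedRpow_le _ t).trans ?_
  rcases le_total |t| 1 with h | h
  · linarith [Real.rpow_le_one (abs_nonneg t) h (sub_nonneg.2 hκ),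
      Real.rpow_nonneg (abs_nonneg t) κ]
  · linarith [Real.rpow_le_rpow_of_exponent_le h (sub_le_self κ zero_le_one)]

section Moments

variable {Ω : Type*} [MeasurableSpace Ω] {μ : Measure Ω} {κ : ℝ}

lemma integrable_abs_rpow_iff_memLp {X : Ω → ℝ} (hX : AEStronglyMeasurable X μ) (hκ : 0 < κ) :
    Integrable (fun ω => |X ω| ^ κ) μ ↔ MemLp X (ENNReal.ofReal κ) μ := by
  simpa [ENNReal.toReal_ofReal hκ.le] using
    integrable_norm_rpow_iff hX (ENNReal.ofReal_pos.2 hκ).ne' ENNReal.ofReal_ne_top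

lemma integrable_abs_finsetSum_rpow {ι : Type*} {U : ι → Ω → ℝ} (s : Finset ι) (hκ : 0 < κ)
    (hU : ∀ i ∈ s, AEStronglyMeasurable (U i) μ)
    (hmom : ∀ i ∈ s, Integrable (fun ω => |U i ω| ^ κ) μ) :
    Integrable (fun ω => |∑ i ∈ s, U i ω| ^ κ) μ := by
  rw [integrable_abs_rpow_iff_memLp (Finset.aestronglyMeasurable_fun_sum s hU) hκ]
  exact memLp_finsetSum s fun i hi => (integrable_abs_rpow_iff_memLp (hU i hi) hκ).1 (hmom i hi)

variable [IsFiniteMeasure μ]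

lemma integral_abs_add_rpow_le (hκ1 : 1 ≤ κ) (hκ2 : κ ≤ 2) {X Y : Ω → ℝ}
    (hX : AEMeasurable X μ) (hXY : IndepFun X Y μ) (hY : Integrable Y μ) (hYc : μ[Y] = 0)
    (hXκ : Integrable (fun ω => |X ω| ^ κ) μ) (hYκ : Integrable (fun ω => |Y ω| ^ κ) μ) :
    ∫ ω, |X ω + Y ω| ^ κ ∂μ ≤ ∫ ω, |X ω| ^ κ ∂μ + 4 * ∫ ω, |Y ω| ^ κ ∂μ := by
  have hκ0 : 0 < κ := by linarith
  set φ : ℝ → ℝ := fun t => κ * signedRpow (κ - 1) t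
  have hφ : Measurable φ :=
    measurable_const.mul (signedRpow_monotone (sub_nonneg.2 hκ1)).measurable
  have hφX : Integrable (fun ω => φ (X ω)) μ := by
    refine ((integrable_const κ).add (hXκ.const_mul κ)).mono'
      (hφ.comp_aemeasurable hX).aestronglyMeasurable (ae_of_all _ fun ω => ?_)
    simpa [φ, abs_mul, abs_of_pos hκ0, mul_add] using
      mul_le_mul_of_nonneg_left (abs_signedRpow_sub_one_le hκ1 (X ω)) hκ0.le
  have hφXY : IndepFun (φ ∘ X) (id ∘ Y) μ := hXY.comp hφ measurable_id
  have hprod : Integrable (fun ω => φ (X ω) * Y ω) μ := hφXY.integrable_mul hφX hY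
  have hcross : ∫ ω, φ (X ω) * Y ω ∂μ = 0 := by
    simpa [hYc] using
      hφXY.integral_fun_mul_eq_mul_integral hφX.aestronglyMeasurable hY.aestronglyMeasurable
  have hXYκ : Integrable (fun ω => |X ω + Y ω| ^ κ) μ :=
    (integrable_abs_rpow_iff_memLp (hX.add hY.aemeasurable).aestronglyMeasurable hκ0).2
      (((integrable_abs_rpow_iff_memLp hX.aestronglyMeasurable hκ0).1 hXκ).add
        ((integrable_abs_rpow_iff_memLp hY.aestronglyMeasurable hκ0).1 hYκ))
  calc ∫ ω, |X ω + Y ω| ^ κ ∂μ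
      ≤ ∫ ω, (|X ω| ^ κ + φ (X ω) * Y ω + 4 * |Y ω| ^ κ) ∂μ :=
        integral_mono hXYκ ((hXκ.add hprod).add (hYκ.const_mul 4))
          fun ω => abs_add_rpow_le hκ1 hκ2 (X ω) (Y ω)
    _ = ∫ ω, |X ω| ^ κ ∂μ + 4 * ∫ ω, |Y ω| ^ κ ∂μ := by
        rw [integral_add _ (hYκ.const_mul 4), integral_add hXκ hprod, hcross,
          integral_const_mul, add_zero]
        exact hXκ.add hprod

lemma integral_abs_finsetSum_rpow_le (hκ1 : 1 ≤ κ) (hκ2 : κ ≤ 2) {ι : Type*}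
    {U : ι → Ω → ℝ} (hU : ∀ i, AEMeasurable (U i) μ) (hindep : iIndepFun U μ)
    (hint : ∀ i, Integrable (U i) μ) (hcent : ∀ i, μ[U i] = 0)
    (hmom : ∀ i, Integrable (fun ω => |U i ω| ^ κ) μ) (s : Finset ι) :
    ∫ ω, |∑ i ∈ s, U i ω| ^ κ ∂μ ≤ 4 * ∑ i ∈ s, ∫ ω, |U i ω| ^ κ ∂μ := by
  classical
  induction s using Finset.induction_on with
  | empty => simp [Real.zero_rpow (by linarith : κ ≠ 0)]
  | insert a s ha ih =>
    have hindep' : IndepFun (fun ω => ∑ i ∈ s, U i ω) (U a) μ := by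
      simpa [Finset.sum_fn] using hindep.indepFun_finsetSum_of_notMem₀ hU ha
    have hstep := integral_abs_add_rpow_le hκ1 hκ2 (Finset.aemeasurable_fun_sum s fun i _ => hU i)
      hindep' (hint a) (hcent a)
      (integrable_abs_finsetSum_rpow s (by linarith) (fun i _ => (hU i).aestronglyMeasurable)
        fun i _ => hmom i) (hmom a)
    simp only [Finset.sum_insert ha, add_comm (U a _)]
    linarith

end Moments

/-- von Bahr–Esseen inequality: for independent centered real random variables
`U₁,…,Uₙ` and `1 ≤ κ ≤ 2`, `E[|∑ᵢ Uᵢ|^κ] ≤ 8 ∑ᵢ E[|Uᵢ|^κ]`. -/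
theorem von_bahr_esseen {Ω : Type*} [MeasureSpace Ω]
    [IsProbabilityMeasure (ℙ : Measure Ω)] (n : ℕ) (U : Fin n → Ω → ℝ)
    (hmeas : ∀ i, Measurable (U i))
    (hindep : iIndepFun U ℙ)
    (hint : ∀ i, Integrable (U i) ℙ)
    (hcent : ∀ i, ∫ ω, U i ω ∂ℙ = 0)
    (κ : ℝ) (hκ1 : 1 ≤ κ) (hκ2 : κ ≤ 2)
    (hmom : ∀ i, Integrable (fun ω => |U i ω| ^ κ) ℙ) :
    ∫ ω, |∑ i, U i ω| ^ κ ∂ℙ ≤ 8 * ∑ i, ∫ ω, |U i ω| ^ κ ∂ℙ := by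
  have hnonneg : 0 ≤ ∑ i, ∫ ω, |U i ω| ^ κ ∂ℙ :=
    sum_nonneg fun i _ => integral_nonneg fun ω => by positivity
  calc ∫ ω, |∑ i, U i ω| ^ κ ∂ℙ ≤ 4 * ∑ i, ∫ ω, |U i ω| ^ κ ∂ℙ :=
        integral_abs_finsetSum_rpow_le hκ1 hκ2 (fun i => (hmeas i).aemeasurable) hindep hint
          hcent hmom univ
    _ ≤ 8 * ∑ i, ∫ ω, |U i ω| ^ κ ∂ℙ := by gcongr; norm_num
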